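/- For every α with 0 < α < 1 and every x > 0, the function f_α(x) = ((x+1)^{2−α} − x^{2−α} − (2−α) x^{1−α}) / ((2−α)((x+1)^{1−α} − x^{1−α})) satisfies 1/2 < f_α(x) < 1/(2−α). -/

import Mathlib

/-!
With `β = 1 - α ∈ (0, 1)` and `2 - α = β + 1`, the lower bound is the trapezoid inequality
`(x ^ β + (x + 1) ^ β) / 2 < ∫ t in x..x+1, t ^ β` for the strictly concave function `t ↦ t ^ β`
(Hermite–Hadamard), and the upper bound is Bernoulli's inequality `(1 + 1/x) ^ β < 1 + β / x`,
i.e. `(x + 1) ^ β` lies below the tangent of `t ↦ t ^ β` at `x`.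
-/

open Set intervalIntegral

theorem integral_chord (a b c d : ℝ) :
    ∫ t in a..b, ((b - t) * c + (t - a) * d) = (b - a) ^ 2 * (c + d) / 2 := by
  rw [integral_add ((by fun_prop : Continuous _).intervalIntegrable _ _)
    ((by fun_prop : Continuous _).intervalIntegrable _ _), integral_mul_const, integral_mul_const,
    integral_comp_sub_left (fun t => t), integral_comp_sub_right (fun t => t)]
  simp
  ring

theorem StrictConcaveOn.trapezoid_lt_integral {f : ℝ → ℝ} {a b : ℝ} (hab : a < b)
    (hf : StrictConcaveOn ℝ (Icc a b) f) (hc : ContinuousOn f (Icc a b)) :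
    (b - a) * (f a + f b) / 2 < ∫ t in a..b, f t := by
  have chord_lt : ∀ t ∈ Ioo a b, (b - t) * f a + (t - a) * f b < (b - a) * f t := by
    intro t ht
    have secant := hf.neg.secant_strict_mono_aux1 (left_mem_Icc.2 hab.le)
      (right_mem_Icc.2 hab.le) ht.1 ht.2
    simp only [Pi.neg_apply] at secant
    linarith
  have hmid : (a + b) / 2 ∈ Ioo a b := ⟨by linarith, by linarith⟩
  have hlt : ∫ t in a..b, ((b - t) * f a + (t - a) * f b) < ∫ t in a..b, (b - a) * f t := by
    refine integral_lt_integral_of_continuousOn_of_le_of_exists_lt hab (by fun_prop)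
      (continuousOn_const.mul hc) (fun t ht => ?_) ⟨_, Ioo_subset_Icc_self hmid, chord_lt _ hmid⟩
    rcases ht.2.eq_or_lt with rfl | htb
    · simp
    · exact (chord_lt t ⟨ht.1, htb⟩).le
  rw [integral_chord, integral_const_mul] at hlt
  refine lt_of_mul_lt_mul_left ?_ (sub_pos.2 hab).le
  linear_combination hlt

theorem rpow_trapezoid_lt {β a b : ℝ} (hβ0 : 0 < β) (hβ1 : β < 1) (ha : 0 ≤ a) (hab : a < b) :
    (β + 1) * ((b - a) * (a ^ β + b ^ β)) < 2 * (b ^ (β + 1) - a ^ (β + 1)) := by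
  have trapezoid := ((Real.strictConcaveOn_rpow hβ0 hβ1).subset (Icc_subset_Ici_self.trans
    (Ici_subset_Ici.2 ha)) (convex_Icc a b)).trapezoid_lt_integral hab
    (Real.continuous_rpow_const hβ0.le).continuousOn
  rw [integral_rpow (Or.inl (by linarith)), lt_div_iff₀ (by linarith)] at trapezoid
  linear_combination 2 * trapezoid

theorem mul_add_one_rpow_lt {β x : ℝ} (hβ0 : 0 < β) (hβ1 : β < 1) (hx : 0 < x) :
    x * (x + 1) ^ β < (x + β) * x ^ β := by
  have bernoulli := rpow_one_add_lt_one_add_mul_self (s := x⁻¹) (by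
    have := inv_pos.2 hx; linarith) (inv_ne_zero hx.ne') hβ0 hβ1
  calc x * (x + 1) ^ β = x * x ^ β * (1 + x⁻¹) ^ β := by
        rw [mul_assoc, ← Real.mul_rpow hx.le (by positivity), mul_add, mul_inv_cancel₀ hx.ne',
          mul_one]
    _ < x * x ^ β * (1 + β * x⁻¹) := by gcongr
    _ = (x + β) * x ^ β := by field_simp

theorem f_alpha_bounds (α x : ℝ) (hα0 : 0 < α) (hα1 : α < 1) (hx : 0 < x) :
    1 / 2 < ((x + 1) ^ (2 - α) - x ^ (2 - α) - (2 - α) * x ^ (1 - α)) /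
        ((2 - α) * ((x + 1) ^ (1 - α) - x ^ (1 - α))) ∧
      ((x + 1) ^ (2 - α) - x ^ (2 - α) - (2 - α) * x ^ (1 - α)) /
        ((2 - α) * ((x + 1) ^ (1 - α) - x ^ (1 - α))) < 1 / (2 - α) := by
  set β := 1 - α
  have hβ0 : 0 < β := by linarith
  have hβ1 : β < 1 := by linarith
  rw [show 2 - α = β + 1 by ring]
  have hD : 0 < (β + 1) * ((x + 1) ^ β - x ^ β) :=
    mul_pos (by linarith) (sub_pos.2 (Real.rpow_lt_rpow hx.le (lt_add_one x) hβ0))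
  constructor
  · have trapezoid := rpow_trapezoid_lt hβ0 hβ1 hx.le (lt_add_one x)
    rw [lt_div_iff₀ hD]
    linear_combination trapezoid / 2
  · have tangent := mul_lt_mul_of_pos_left (mul_add_one_rpow_lt hβ0 hβ1 hx)
      (by linarith : 0 < β + 1)
    rw [div_lt_div_iff₀ hD (by linarith), Real.rpow_add_one (by linarith),
      Real.rpow_add_one hx.ne']
    linear_combination tangent
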